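/- arXiv:2303.12820 — 11 statements merged into one kernel-verified Lean document; each statement's English description precedes it below -/
import Mathlib

section
/- (Hopf's theorem, one direction) The complement of the horizontal chord set is additive: if f : [0,1] → ℝ is continuous with f(0) = f(1) = 0, and a, b > 0 satisfy a ∉ S(f) and b ∉ S(f), then a + b ∉ S(f). -/
open Set

def chordSet (f : ℝ → ℝ) : Set ℝ :=
  {ℓ | ℓ ∈ Set.Icc (0:ℝ) 1 ∧ ∃ s ∈ Set.Icc (0:ℝ) 1, s + ℓ ∈ Set.Icc (0:ℝ) 1 ∧ f s = f (s + ℓ)}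

lemma signLemma (g : ℝ → ℝ) (c : ℝ) (hg : ContinuousOn g (Icc 0 c))
    (hne : ∀ x ∈ Icc (0:ℝ) c, g x ≠ 0) :
    (∀ x ∈ Icc (0:ℝ) c, 0 < g x) ∨ (∀ x ∈ Icc (0:ℝ) c, g x < 0) := by
  by_contra h
  push_neg at h
  obtain ⟨⟨x, hx, hgx⟩, ⟨y, hy, hgy⟩⟩ := h
  have hsub : uIcc x y ⊆ Icc (0:ℝ) c := uIcc_subset_Icc hx hy
  have := intermediate_value_uIcc (hg.mono hsub)
  have h0 : (0:ℝ) ∈ uIcc (g x) (g y) := mem_uIcc.2 (Or.inl ⟨hgx, hgy⟩)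
  obtain ⟨z, hz, hz0⟩ := this h0
  exact hne z (hsub hz) hz0

lemma noWalk (f : ℝ → ℝ) (hf : ContinuousOn f (Icc 0 1)) (a b δ : ℝ)
    (ha : 0 < a) (hb : 0 < b) (hab : a + b ≤ 1) (hδ : 0 < δ)
    (hA : ∀ x ∈ Icc (0:ℝ) 1, x + a ≤ 1 → f x + δ ≤ f (x + a))
    (hB : ∀ x ∈ Icc (0:ℝ) 1, b ≤ x → f x + δ ≤ f (x - b)) : False := by
  obtain ⟨xM, _, hM⟩ := isCompact_Icc.exists_isMaxOn (Set.nonempty_Icc.2 zero_le_one) hf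
  set M := f xM with hMdef
  set t : ℕ → ℝ := fun n => Nat.rec 0 (fun _ p => if p + a ≤ 1 then p + a else p - b) n with ht
  have key : ∀ n : ℕ, t n ∈ Icc (0:ℝ) 1 ∧ f 0 + n * δ ≤ f (t n) := by
    intro n
    induction n with
    | zero => simp [ht]
    | succ n ih =>
      obtain ⟨hmem, hval⟩ := ih
      have hstep : t (n+1) = if t n + a ≤ 1 then t n + a else t n - b := rfl
      by_cases hc : t n + a ≤ 1
      · rw [hstep, if_pos hc]
        refine ⟨⟨by linarith [hmem.1], hc⟩, ?_⟩
        have := hA (t n) hmem hc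
        push_cast
        linarith
      · push_neg at hc
        have hbt : b ≤ t n := by linarith
        rw [hstep, if_neg (not_le.2 hc)]
        refine ⟨⟨by linarith, by linarith [hmem.2]⟩, ?_⟩
        have := hB (t n) hmem hbt
        push_cast
        linarith
  obtain ⟨n, hn⟩ := exists_nat_gt ((M - f 0) / δ)
  obtain ⟨hmem, hval⟩ := key n
  have hle : f (t n) ≤ M := hM hmem
  rw [div_lt_iff₀ hδ] at hn
  linarith

lemma upStep (f : ℝ → ℝ) (a : ℝ) (ha1 : a ≤ 1)
    (hca : ContinuousOn (fun x => f (x + a) - f x) (Icc 0 (1 - a)))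
    (hpos : ∀ x ∈ Icc (0:ℝ) (1 - a), 0 < f (x + a) - f x) :
    ∃ δ > 0, ∀ x ∈ Icc (0:ℝ) 1, x + a ≤ 1 → f x + δ ≤ f (x + a) := by
  obtain ⟨x0, hx0, hmin⟩ := isCompact_Icc.exists_isMinOn
    (Set.nonempty_Icc.2 (by linarith : (0:ℝ) ≤ 1 - a)) hca
  refine ⟨f (x0 + a) - f x0, hpos x0 hx0, ?_⟩
  intro x hx hxa
  have hmem : x ∈ Icc (0:ℝ) (1 - a) := ⟨hx.1, by linarith⟩
  have := isMinOn_iff.mp hmin x hmem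
  linarith

lemma downStep (f : ℝ → ℝ) (a : ℝ) (ha1 : a ≤ 1)
    (hca : ContinuousOn (fun x => f (x + a) - f x) (Icc 0 (1 - a)))
    (hneg : ∀ x ∈ Icc (0:ℝ) (1 - a), f (x + a) - f x < 0) :
    ∃ δ > 0, ∀ x ∈ Icc (0:ℝ) 1, a ≤ x → f x + δ ≤ f (x - a) := by
  obtain ⟨x0, hx0, hmax⟩ := isCompact_Icc.exists_isMaxOn
    (Set.nonempty_Icc.2 (by linarith : (0:ℝ) ≤ 1 - a)) hca
  refine ⟨-(f (x0 + a) - f x0), by linarith [hneg x0 hx0], ?_⟩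
  intro x hx hxa
  have hmem : x - a ∈ Icc (0:ℝ) (1 - a) := ⟨by linarith [hx.1], by linarith [hx.2]⟩
  have := isMaxOn_iff.mp hmax (x - a) hmem
  have hxx : x - a + a = x := by ring
  rw [hxx] at this
  linarith

theorem stmt3 (f : ℝ → ℝ) (hf : ContinuousOn f (Set.Icc 0 1))
    (h0 : f 0 = 0) (h1 : f 1 = 0) (a b : ℝ) (ha : 0 < a) (hb : 0 < b)
    (haS : a ∉ chordSet f) (hbS : b ∉ chordSet f) :
    a + b ∉ chordSet f := by
  intro hab
  obtain ⟨⟨habge, hable⟩, s, hs, hsab, heq⟩ := hab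
  have ha1 : a ≤ 1 := by linarith
  have hb1 : b ≤ 1 := by linarith
  -- nonvanishing of chord-gap functions
  have hgA : ∀ x ∈ Icc (0:ℝ) (1 - a), f (x + a) - f x ≠ 0 := by
    intro x hx h
    exact haS ⟨⟨ha.le, ha1⟩, x, ⟨hx.1, by linarith [hx.2]⟩,
      ⟨by linarith [hx.1], by linarith [hx.2]⟩, by linarith⟩
  have hgB : ∀ x ∈ Icc (0:ℝ) (1 - b), f (x + b) - f x ≠ 0 := by
    intro x hx h
    exact hbS ⟨⟨hb.le, hb1⟩, x, ⟨hx.1, by linarith [hx.2]⟩,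
      ⟨by linarith [hx.1], by linarith [hx.2]⟩, by linarith⟩
  -- continuity
  have hcA : ContinuousOn (fun x => f (x + a) - f x) (Icc 0 (1 - a)) := by
    refine ContinuousOn.sub ?_ (hf.mono (Icc_subset_Icc le_rfl (by linarith)))
    refine hf.comp ((continuous_id.add continuous_const).continuousOn) ?_
    intro x hx
    exact ⟨by simp; linarith [hx.1], by simp; linarith [hx.2]⟩
  have hcB : ContinuousOn (fun x => f (x + b) - f x) (Icc 0 (1 - b)) := by
    refine ContinuousOn.sub ?_ (hf.mono (Icc_subset_Icc le_rfl (by linarith)))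
    refine hf.comp ((continuous_id.add continuous_const).continuousOn) ?_
    intro x hx
    exact ⟨by simp; linarith [hx.1], by simp; linarith [hx.2]⟩
  have hsA := signLemma _ _ hcA hgA
  have hsB := signLemma _ _ hcB hgB
  have hsmemB : s ∈ Icc (0:ℝ) (1 - b) := ⟨hs.1, by linarith [hsab.2]⟩
  have hsmemA : s + b ∈ Icc (0:ℝ) (1 - a) := ⟨by linarith [hs.1], by linarith [hsab.2]⟩
  have heq' : f s = f (s + b + a) := by
    have : s + (a + b) = s + b + a := by ring
    rwa [this] at heq
  rcases hsA with hApos | hAneg <;> rcases hsB with hBpos | hBneg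
  · -- both positive: direct contradiction at s
    have h1' := hApos (s + b) hsmemA
    have h2' := hBpos s hsmemB
    linarith
  · -- a up, b down: walk with steps +a, -b
    obtain ⟨δ1, hδ1, hA⟩ := upStep f a ha1 hcA hApos
    obtain ⟨δ2, hδ2, hB⟩ := downStep f b hb1 hcB hBneg
    refine noWalk f hf a b (min δ1 δ2) ha hb (by linarith) (lt_min hδ1 hδ2) ?_ ?_
    · intro x hx hxa
      have := hA x hx hxa
      have := min_le_left δ1 δ2
      linarith
    · intro x hx hxb
      have := hB x hx hxb
      have := min_le_right δ1 δ2
      linarith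
  · -- a down, b up: walk with steps +b, -a
    obtain ⟨δ1, hδ1, hA⟩ := upStep f b hb1 hcB hBpos
    obtain ⟨δ2, hδ2, hB⟩ := downStep f a ha1 hcA hAneg
    refine noWalk f hf b a (min δ1 δ2) hb ha (by linarith) (lt_min hδ1 hδ2) ?_ ?_
    · intro x hx hxb
      have := hA x hx hxb
      have := min_le_left δ1 δ2
      linarith
    · intro x hx hxa
      have := hB x hx hxa
      have := min_le_right δ1 δ2
      linarith
  · -- both negative: direct contradiction at s
    have h1' := hAneg (s + b) hsmemA
    have h2' := hBneg s hsmemB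
    linarith
end

section
/- (Universal Chord Theorem) For every continuous f : [0,1] → ℝ with f(0) = f(1) = 0 and every positive integer n, the length 1/n belongs to the horizontal chord set S(f). -/
/-!
With `c = 1/n`, the increments `f (x + c) - f x` at the points `0, c, …, (n-1)c` telescope to
`f 1 - f 0 = 0`, so one of them is `≤ 0` and another `≥ 0`; the intermediate value theorem gives a
zero of the continuous function `x ↦ f (x + c) - f x` on `[0, 1 - c]`.
-/

open Set Finset

theorem IsPreconnected.exists_eq_zero_of_sum_eq_zero {α ι : Type*} [TopologicalSpace α]
    {s : Set α} (hs : IsPreconnected s) {g : α → ℝ} (hg : ContinuousOn g s)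
    {t : Finset ι} (ht : t.Nonempty) {p : ι → α} (hp : ∀ i ∈ t, p i ∈ s)
    (hsum : ∑ i ∈ t, g (p i) = 0) : ∃ x ∈ s, g x = 0 := by
  obtain ⟨i, hi, hgi⟩ :=
    exists_le_of_sum_le ht (f := fun i ↦ g (p i)) (g := 0) (by simp [hsum])
  obtain ⟨j, hj, hgj⟩ :=
    exists_le_of_sum_le ht (f := 0) (g := fun i ↦ g (p i)) (by simp [hsum])
  exact hs.intermediate_value (hp i hi) (hp j hj) hg ⟨hgi, hgj⟩

theorem exists_eq_add_of_continuousOn_Icc {f : ℝ → ℝ} {a c : ℝ} {n : ℕ} (hc : 0 ≤ c)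
    (hn : n ≠ 0) (hf : ContinuousOn f (Icc a (a + n * c))) (hfa : f a = f (a + n * c)) :
    ∃ x ∈ Icc a (a + (n - 1) * c), f x = f (x + c) := by
  have hshift : ∀ x ∈ Icc a (a + (n - 1) * c), x + c ∈ Icc a (a + n * c) := fun x hx ↦
    ⟨by linarith [hx.1], by linarith [hx.2]⟩
  have hsub : Icc a (a + (n - 1) * c) ⊆ Icc a (a + n * c) :=
    Icc_subset_Icc_right (by linarith)
  have hcont : ContinuousOn (fun x ↦ f (x + c) - f x) (Icc a (a + (n - 1) * c)) :=
    (hf.comp (continuousOn_id.add continuousOn_const) hshift).sub (hf.mono hsub)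
  have hpts : ∀ k ∈ range n, a + k * c ∈ Icc a (a + (n - 1) * c) := by
    intro k hk
    have hk' : (k : ℝ) ≤ n - 1 := by
      have : (k : ℝ) + 1 ≤ n := by exact_mod_cast mem_range.mp hk
      linarith
    exact ⟨by nlinarith [k.cast_nonneg (α := ℝ)], by nlinarith⟩
  have htelescope : ∑ k ∈ range n, (f (a + k * c + c) - f (a + k * c)) = 0 := by
    have hstep : ∀ k : ℕ, a + k * c + c = a + ((k + 1 : ℕ) : ℝ) * c := by
      intro k; push_cast; ring
    simp only [hstep]
    rw [sum_range_sub (fun k : ℕ ↦ f (a + k * c)), ← hfa]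
    simp
  obtain ⟨x, hx, hx0⟩ := isPreconnected_Icc.exists_eq_zero_of_sum_eq_zero hcont
    (nonempty_range_iff.mpr hn) hpts htelescope
  exact ⟨x, hx, (sub_eq_zero.mp hx0).symm⟩

theorem stmt4 (f : ℝ → ℝ) (hf : ContinuousOn f (Set.Icc 0 1))
    (h0 : f 0 = 0) (h1 : f 1 = 0) (n : ℕ) (hn : 1 ≤ n) :
    (1 : ℝ) / n ∈ chordSet f := by
  have hn0 : (n : ℝ) ≠ 0 := by positivity
  have hlen : (0 : ℝ) + n * (1 / n) = 1 := by field_simp; ring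
  have hc : (0 : ℝ) ≤ 1 / n := by positivity
  obtain ⟨x, hx, hfx⟩ := exists_eq_add_of_continuousOn_Icc hc (by omega)
    (hlen ▸ hf) (by rw [hlen, h0, h1])
  have hx1 : x + 1 / n ≤ 1 := by linarith [hx.2]
  refine ⟨⟨hc, ?_⟩, x, ⟨hx.1, by linarith⟩, ⟨by linarith [hx.1], hx1⟩, hfx⟩
  linarith [hx.1]
end

section
/- If f : [0,1] → ℝ is continuous, f|[s₁,s₂] is a mountain range (i.e., f(s₁) = f(s₂) = 0 and f([s₁,s₂]) = [0,a] for some a > 0), then every ℓ ∈ [0, s₂ - s₁] is a horizontal chord length of f: there exists s with s, s + ℓ ∈ [s₁, s₂] and f(s) = f(s + ℓ). -/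
theorem stmt5 (f : ℝ → ℝ) (hf : ContinuousOn f (Set.Icc 0 1))
    (s₁ s₂ a : ℝ) (hs : s₁ < s₂) (hmem : s₁ ∈ Set.Icc (0:ℝ) 1) (hmem' : s₂ ∈ Set.Icc (0:ℝ) 1)
    (ha : 0 < a) (h₁ : f s₁ = 0) (h₂ : f s₂ = 0)
    (himg : f '' Set.Icc s₁ s₂ = Set.Icc 0 a) :
    ∀ ℓ ∈ Set.Icc 0 (s₂ - s₁),
      ∃ s, s ∈ Set.Icc s₁ s₂ ∧ s + ℓ ∈ Set.Icc s₁ s₂ ∧ f s = f (s + ℓ) := by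
  intro ℓ hℓ
  obtain ⟨hℓ0, hℓ1⟩ := hℓ
  have hsub : Set.Icc s₁ s₂ ⊆ Set.Icc (0:ℝ) 1 := Set.Icc_subset_Icc hmem.1 hmem'.2
  have hnonneg : ∀ x ∈ Set.Icc s₁ s₂, 0 ≤ f x := by
    intro x hx
    have : f x ∈ Set.Icc 0 a := himg ▸ Set.mem_image_of_mem f hx
    exact this.1
  -- g x = f (x + ℓ) - f x on [s₁, s₂ - ℓ]
  set g : ℝ → ℝ := fun x => f (x + ℓ) - f x with hg
  have hI : Set.Icc s₁ (s₂ - ℓ) ⊆ Set.Icc s₁ s₂ := by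
    apply Set.Icc_subset_Icc le_rfl; linarith
  have hmap : ∀ x ∈ Set.Icc s₁ (s₂ - ℓ), x + ℓ ∈ Set.Icc s₁ s₂ := by
    intro x hx
    constructor <;> [linarith [hx.1]; linarith [hx.2]]
  have hgc : ContinuousOn g (Set.Icc s₁ (s₂ - ℓ)) := by
    apply ContinuousOn.sub
    · exact (hf.comp (by continuity : Continuous fun x : ℝ => x + ℓ).continuousOn
        (fun x hx => hsub (hmap x hx)))
    · exact hf.mono (fun x hx => hsub (hI hx))
  have h12 : s₁ ≤ s₂ - ℓ := by linarith
  have hgs₁ : 0 ≤ g s₁ := by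
    have := hnonneg (s₁ + ℓ) (hmap s₁ ⟨le_rfl, h12⟩)
    simp [hg, h₁]; linarith
  have hgs₂ : g (s₂ - ℓ) ≤ 0 := by
    have := hnonneg (s₂ - ℓ) ⟨by linarith, by linarith⟩
    simp [hg, h₂]
    linarith [this]
  have : (0:ℝ) ∈ g '' Set.Icc s₁ (s₂ - ℓ) := by
    apply intermediate_value_Icc' h12 hgc
    exact ⟨hgs₂, hgs₁⟩
  obtain ⟨s, hsI, hgs⟩ := this
  exact ⟨s, hI hsI, hmap s hsI, by simpa [hg, sub_eq_zero, eq_comm] using hgs⟩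
end

section
/- If f : [0,1] → ℝ is continuous with f(0) = f(1) = 0 and f(x) ≥ 0 for all x ∈ [0,1], then f has the full chord property: S(f) = [0,1]. -/
theorem stmt6 (f : ℝ → ℝ) (hf : ContinuousOn f (Set.Icc 0 1))
    (h0 : f 0 = 0) (h1 : f 1 = 0) (hpos : ∀ x ∈ Set.Icc (0:ℝ) 1, 0 ≤ f x) :
    chordSet f = Set.Icc 0 1 := by
  ext ℓ
  simp only [chordSet, Set.mem_setOf_eq]
  constructor
  · rintro ⟨h, -⟩; exact h
  · rintro ⟨hl0, hl1⟩
    refine ⟨⟨hl0, hl1⟩, ?_⟩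
    set g : ℝ → ℝ := fun s => f (s + ℓ) - f s with hg
    have hsub : ∀ s ∈ Set.Icc (0:ℝ) (1 - ℓ), s ∈ Set.Icc (0:ℝ) 1 ∧ s + ℓ ∈ Set.Icc (0:ℝ) 1 := by
      rintro s ⟨hs0, hs1⟩
      refine ⟨⟨hs0, by linarith⟩, ⟨by linarith, by linarith⟩⟩
    have hgc : ContinuousOn g (Set.Icc (0:ℝ) (1 - ℓ)) := by
      apply ContinuousOn.sub
      · exact (hf.comp (by fun_prop) (fun s hs => (hsub s hs).2))
      · exact hf.mono (fun s hs => (hsub s hs).1)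
    have hle : (0:ℝ) ≤ 1 - ℓ := by linarith
    have hmem : (0:ℝ) ∈ Set.Icc (g (1 - ℓ)) (g 0) := by
      constructor
      · have : f (1 - ℓ + ℓ) = 0 := by rw [show (1 - ℓ + ℓ) = 1 by ring, h1]
        have := hpos (1 - ℓ) ⟨by linarith, by linarith⟩
        simp only [hg]
        linarith
      · have := hpos (0 + ℓ) ⟨by linarith, by linarith⟩
        simp only [hg, h0]
        linarith
    obtain ⟨s, hs, hgs⟩ := intermediate_value_Icc' hle hgc hmem
    exact ⟨s, (hsub s hs).1, (hsub s hs).2, by simpa [hg, sub_eq_zero, eq_comm] using hgs⟩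
end

section
/- For every continuous f : [0,1] → ℝ with f(0) = f(1) = 0, the Lebesgue measure of the horizontal chord set S(f) is at least 1/2. -/
open Set MeasureTheory

/-- A continuous nonvanishing function on an interval has constant sign. -/
lemma sign_const {g : ℝ → ℝ} {a b : ℝ}
    (hg : ContinuousOn g (Icc a b)) (hne : ∀ x ∈ Icc a b, g x ≠ 0) :
    (∀ x ∈ Icc a b, 0 < g x) ∨ (∀ x ∈ Icc a b, g x < 0) := by
  by_contra h
  push_neg at h
  obtain ⟨⟨x, hx, hx0⟩, ⟨y, hy, hy0⟩⟩ := h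
  have hxneg : g x < 0 := lt_of_le_of_ne hx0 (hne x hx)
  have hypos : 0 < g y := lt_of_le_of_ne hy0 (Ne.symm (hne y hy))
  have hsub : uIcc x y ⊆ Icc a b := by
    rw [uIcc_eq_union]
    exact union_subset (Icc_subset_Icc hx.1 hy.2) (Icc_subset_Icc hy.1 hx.2)
  have := intermediate_value_uIcc (hg.mono hsub)
  have h0 : (0:ℝ) ∈ uIcc (g x) (g y) := by
    rw [mem_uIcc]; left; exact ⟨hxneg.le, hypos.le⟩
  obtain ⟨z, hz, hz0⟩ := this h0
  exact hne z (hsub hz) hz0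

/-- The key chain argument: if stepping by ℓ always strictly increases f and
stepping by 1-ℓ always strictly decreases f, then following the orbit of
0 under adding ℓ mod 1 gives a strictly increasing sequence; if n*ℓ is an
integer, this is a contradiction. -/
lemma chain (f : ℝ → ℝ) (ℓ : ℝ) (hℓ0 : 0 < ℓ) (hℓ1 : ℓ < 1)
    (hg : ∀ s : ℝ, 0 ≤ s → s + ℓ ≤ 1 → f s < f (s + ℓ))
    (hh : ∀ t : ℝ, 0 ≤ t → t ≤ ℓ → f (t + (1 - ℓ)) < f t)
    (n : ℕ) (hn : 0 < n) (hfr : Int.fract ((n : ℝ) * ℓ) = 0) : False := by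
  set x : ℕ → ℝ := fun k => Int.fract ((k : ℝ) * ℓ) with hxdef
  have hx0 : ∀ k, 0 ≤ x k := fun k => Int.fract_nonneg _
  have hx1 : ∀ k, x k < 1 := fun k => Int.fract_lt_one _
  have hstep : ∀ k, x (k + 1) = Int.fract (x k + ℓ) := by
    intro k
    have : ((k + 1 : ℕ) : ℝ) * ℓ = (⌊(k : ℝ) * ℓ⌋ : ℝ) + (x k + ℓ) := by
      simp only [hxdef, Int.fract]
      push_cast
      ring
    simp only [hxdef]
    rw [this, Int.fract_intCast_add]
  have key : ∀ k, f (x k) < f (x (k + 1)) := by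
    intro k
    rcases lt_or_ge (x k + ℓ) 1 with hlt | hge
    · have hxx : x (k + 1) = x k + ℓ := by
        rw [hstep k, Int.fract_eq_self.2 ⟨by linarith [hx0 k], hlt⟩]
      rw [hxx]
      exact hg (x k) (hx0 k) hlt.le
    · have hxx : x (k + 1) = x k + ℓ - 1 := by
        rw [hstep k]
        have : Int.fract (x k + ℓ) = Int.fract (x k + ℓ - (1 : ℤ)) := by
          rw [Int.fract_sub_intCast]
        rw [this]
        push_cast
        exact Int.fract_eq_self.2 ⟨by linarith, by linarith [hx1 k]⟩
      rw [hxx]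
      have h1 : (0:ℝ) ≤ x k + ℓ - 1 := by linarith
      have h2 : x k + ℓ - 1 ≤ ℓ := by linarith [hx1 k]
      have := hh (x k + ℓ - 1) h1 h2
      have harg : x k + ℓ - 1 + (1 - ℓ) = x k := by ring
      rwa [harg] at this
  have hmono : StrictMono (fun k => f (x k)) := strictMono_nat_of_lt_succ key
  have h0n : f (x 0) < f (x n) := hmono hn
  have hx00 : x 0 = 0 := by simp [hxdef]
  have hxn0 : x n = 0 := hfr
  rw [hx00, hxn0] at h0n
  exact lt_irrefl _ h0n

/-- For rational ℓ in (0,1): either ℓ or 1-ℓ is a chord length. -/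
lemma rat_mem (f : ℝ → ℝ) (hf : ContinuousOn f (Set.Icc 0 1))
    (h0 : f 0 = 0) (h1 : f 1 = 0) (ℓ : ℝ) (hℓ : ℓ ∈ Ioo (0:ℝ) 1)
    (hrat : ∃ q : ℚ, (q : ℝ) = ℓ) :
    ℓ ∈ chordSet f ∨ (1 - ℓ) ∈ chordSet f := by
  obtain ⟨hℓ0, hℓ1⟩ := hℓ
  by_contra hcon
  push_neg at hcon
  obtain ⟨hc1, hc2⟩ := hcon
  -- ℓ is not a chord: f (s + ℓ) ≠ f s on [0, 1-ℓ]
  have hgne : ∀ s ∈ Icc (0:ℝ) (1 - ℓ), f (s + ℓ) - f s ≠ 0 := by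
    intro s hs hzero
    exact hc1 ⟨⟨hℓ0.le, hℓ1.le⟩, s, ⟨hs.1, by linarith [hs.2]⟩,
      ⟨by linarith [hs.1], by linarith [hs.2]⟩, by linarith [sub_eq_zero.1 hzero]⟩
  have hhne : ∀ t ∈ Icc (0:ℝ) ℓ, f (t + (1 - ℓ)) - f t ≠ 0 := by
    intro t ht hzero
    exact hc2 ⟨⟨by linarith, by linarith⟩, t, ⟨ht.1, by linarith [ht.2]⟩,
      ⟨by linarith [ht.1], by linarith [ht.2]⟩, by linarith [sub_eq_zero.1 hzero]⟩
  -- continuity of the two difference functions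
  have hgc : ContinuousOn (fun s => f (s + ℓ) - f s) (Icc 0 (1 - ℓ)) := by
    apply ContinuousOn.sub
    · exact hf.comp ((continuous_id.add continuous_const).continuousOn)
        (fun s hs => ⟨by linarith [hs.1], by linarith [hs.2]⟩)
    · exact hf.mono (Icc_subset_Icc le_rfl (by linarith))
  have hhc : ContinuousOn (fun t => f (t + (1 - ℓ)) - f t) (Icc 0 ℓ) := by
    apply ContinuousOn.sub
    · exact hf.comp ((continuous_id.add continuous_const).continuousOn)
        (fun t ht => ⟨by linarith [ht.1], by linarith [ht.2]⟩)
    · exact hf.mono (Icc_subset_Icc le_rfl (by linarith))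
  have hgsign := sign_const hgc hgne
  have hhsign := sign_const hhc hhne
  -- get n with n * ℓ having zero fractional part
  obtain ⟨q, hq⟩ := hrat
  have hden : (0:ℝ) < (q.den : ℝ) := by positivity
  have hnum : ((q.den : ℝ)) * ℓ = ((q.num : ℤ) : ℝ) := by
    rw [← hq, mul_comm]
    exact_mod_cast Rat.mul_den_eq_num q
  have hfr : Int.fract ((q.den : ℝ) * ℓ) = 0 := by
    rw [hnum]; exact Int.fract_intCast _
  have hdenpos : 0 < q.den := q.den_pos
  rcases hgsign with hgpos | hgneg
  · -- g > 0 everywhere; show h < 0 everywhere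
    have hh0 : f ((0:ℝ) + (1 - ℓ)) - f 0 < 0 := by
      have := hgpos (1 - ℓ) ⟨by linarith, le_rfl⟩
      have he : (1 - ℓ) + ℓ = 1 := by ring
      rw [he] at this
      rw [zero_add, h0]
      linarith
    have hhneg : ∀ t ∈ Icc (0:ℝ) ℓ, f (t + (1 - ℓ)) - f t < 0 := by
      rcases hhsign with hp | hn
      · exact absurd (hp 0 ⟨le_rfl, hℓ0.le⟩) (by linarith)
      · exact hn
    exact chain f ℓ hℓ0 hℓ1
      (fun s hs hs1 => by linarith [hgpos s ⟨hs, by linarith⟩])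
      (fun t ht ht1 => by linarith [hhneg t ⟨ht, ht1⟩])
      q.den hdenpos hfr
  · -- g < 0 everywhere; apply chain to -f
    have hh0 : 0 < f ((0:ℝ) + (1 - ℓ)) - f 0 := by
      have := hgneg (1 - ℓ) ⟨by linarith, le_rfl⟩
      have he : (1 - ℓ) + ℓ = 1 := by ring
      rw [he] at this
      rw [zero_add, h0]
      linarith
    have hhpos : ∀ t ∈ Icc (0:ℝ) ℓ, 0 < f (t + (1 - ℓ)) - f t := by
      rcases hhsign with hp | hn
      · exact hp
      · exact absurd (hn 0 ⟨le_rfl, hℓ0.le⟩) (by linarith)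
    exact chain (fun x => -(f x)) ℓ hℓ0 hℓ1
      (fun s hs hs1 => by simp only [neg_lt_neg_iff]; linarith [hgneg s ⟨hs, by linarith⟩])
      (fun t ht ht1 => by simp only [neg_lt_neg_iff]; linarith [hhpos t ⟨ht, ht1⟩])
      q.den hdenpos hfr

lemma isClosed_chordSet (f : ℝ → ℝ) (hf : ContinuousOn f (Set.Icc 0 1)) :
    IsClosed (chordSet f) := by
  set C : Set (ℝ × ℝ) :=
    {p | p.1 ∈ Icc (0:ℝ) 1 ∧ p.2 ∈ Icc (0:ℝ) 1 ∧ p.1 + p.2 ∈ Icc (0:ℝ) 1} with hC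
  have hCeq : C = (Icc (0:ℝ) 1 ×ˢ Icc (0:ℝ) 1) ∩ ((fun p : ℝ × ℝ => p.1 + p.2) ⁻¹' Icc 0 1) := by
    ext p
    constructor
    · rintro ⟨ha, hb, hc⟩; exact ⟨⟨ha, hb⟩, hc⟩
    · rintro ⟨⟨ha, hb⟩, hc⟩; exact ⟨ha, hb, hc⟩
  have hCcompact : IsCompact C := by
    rw [hCeq]
    exact (isCompact_Icc.prod isCompact_Icc).inter_right
      (isClosed_Icc.preimage (continuous_fst.add continuous_snd))
  have hCclosed : IsClosed C := hCcompact.isClosed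
  set φ : ℝ × ℝ → ℝ := fun p => f p.1 - f (p.1 + p.2) with hφ
  have hφc : ContinuousOn φ C := by
    apply ContinuousOn.sub
    · exact hf.comp continuous_fst.continuousOn (fun p hp => hp.1)
    · exact hf.comp (continuous_fst.add continuous_snd).continuousOn (fun p hp => hp.2.2)
  have hKclosed : IsClosed (C ∩ φ ⁻¹' {0}) :=
    hφc.preimage_isClosed_of_isClosed hCclosed isClosed_singleton
  have hKcompact : IsCompact (C ∩ φ ⁻¹' {0}) :=
    IsCompact.of_isClosed_subset hCcompact hKclosed inter_subset_left
  have himg : chordSet f = Prod.snd '' (C ∩ φ ⁻¹' {0}) := by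
    ext ℓ
    constructor
    · rintro ⟨hℓ, s, hs, hsl, heq⟩
      exact ⟨(s, ℓ), ⟨⟨hs, hℓ, hsl⟩, by simp [hφ, sub_eq_zero, heq]⟩, rfl⟩
    · rintro ⟨⟨s, ℓ'⟩, ⟨⟨hs, hℓ, hsl⟩, heq⟩, rfl⟩
      refine ⟨hℓ, s, hs, hsl, ?_⟩
      simpa [hφ, sub_eq_zero] using heq
  rw [himg]
  exact (hKcompact.image continuous_snd).isClosed

theorem stmt8 (f : ℝ → ℝ) (hf : ContinuousOn f (Set.Icc 0 1))
    (h0 : f 0 = 0) (h1 : f 1 = 0) :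
    MeasureTheory.volume (chordSet f) ≥ 1/2 := by
  set S := chordSet f with hS
  have hScl : IsClosed S := isClosed_chordSet f hf
  set S' : Set ℝ := (fun x => 1 - x) ⁻¹' S with hS'
  have hS'cl : IsClosed S' := hScl.preimage (continuous_const.sub continuous_id)
  set T := S ∪ S' with hT
  have hTcl : IsClosed T := hScl.union hS'cl
  -- rationals in (0,1) are in T
  have hQ : Ioo (0:ℝ) 1 ∩ Set.range (Rat.cast : ℚ → ℝ) ⊆ T := by
    rintro ℓ ⟨hℓ, q, hq⟩
    rcases rat_mem f hf h0 h1 ℓ hℓ ⟨q, hq⟩ with h | h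
    · exact Or.inl h
    · exact Or.inr h
  -- [0,1] ⊆ T by density and closedness
  have hIccT : Icc (0:ℝ) 1 ⊆ T := by
    have h1' : Ioo (0:ℝ) 1 ⊆ closure (Ioo (0:ℝ) 1 ∩ Set.range (Rat.cast : ℚ → ℝ)) :=
      Dense.open_subset_closure_inter Rat.denseRange_cast isOpen_Ioo
    have h2' : closure (Ioo (0:ℝ) 1 ∩ Set.range (Rat.cast : ℚ → ℝ)) ⊆ T :=
      hTcl.closure_subset_iff.2 hQ
    have h3' : Ioo (0:ℝ) 1 ⊆ T := h1'.trans h2'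
    calc Icc (0:ℝ) 1 = closure (Ioo (0:ℝ) 1) := (closure_Ioo (by norm_num)).symm
      _ ⊆ closure T := closure_mono h3'
      _ = T := hTcl.closure_eq
  -- measure computation
  have hSm : MeasurableSet S := hScl.measurableSet
  have hvol : volume S' = volume S :=
    (MeasureTheory.Measure.measurePreserving_sub_left volume 1).measure_preimage
      hSm.nullMeasurableSet
  have h1T : (1 : ENNReal) ≤ volume T := by
    calc (1 : ENNReal) = volume (Icc (0:ℝ) 1) := by
          rw [Real.volume_Icc]; norm_num
      _ ≤ volume T := measure_mono hIccT
  have hle : volume T ≤ volume S + volume S := by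
    calc volume T ≤ volume S + volume S' := measure_union_le _ _
      _ = volume S + volume S := by rw [hvol]
  have hsum : (1 : ENNReal) ≤ volume S + volume S := h1T.trans hle
  rw [ge_iff_le]
  by_contra hlt
  push_neg at hlt
  have : volume S + volume S < 1/2 + 1/2 := ENNReal.add_lt_add hlt hlt
  rw [ENNReal.add_halves] at this
  exact absurd hsum (not_le.2 this)
end

section
/- For every continuous f : [0,1] → ℝ with f(0) = f(1) = 0 and every d ∈ (0,1] with d ∈ S(f), the Lebesgue measure of S(f) ∩ [0,d] is at least d/2. -/
-- Core impossibility: opposite strict signs for step a and step b with a+b ≤ 1.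
lemma chord_core (f : ℝ → ℝ) (hf : ContinuousOn f (Set.Icc 0 1))
    (a b : ℝ) (ha : 0 < a) (hb : 0 < b) (hab : a + b ≤ 1)
    (hpa : ∀ t, 0 ≤ t → t + a ≤ 1 → f t < f (t + a))
    (hpb : ∀ t, 0 ≤ t → t + b ≤ 1 → f (t + b) < f t) : False := by
  have hsub : Set.Icc (0:ℝ) (a + b) ⊆ Set.Icc 0 1 :=
    Set.Icc_subset_Icc le_rfl hab
  have hcont : ContinuousOn f (Set.Icc 0 (a + b)) := hf.mono hsub
  obtain ⟨t0, ht0mem, ht0max⟩ :=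
    IsCompact.exists_isMaxOn isCompact_Icc ⟨0, by constructor <;> positivity⟩ hcont
  obtain ⟨h0t, hta⟩ := ht0mem
  by_cases hcase : t0 ≤ b
  · have h1 : t0 + a ≤ 1 := by linarith
    have := hpa t0 h0t h1
    have hin : t0 + a ∈ Set.Icc (0:ℝ) (a + b) := ⟨by linarith, by linarith⟩
    exact absurd (ht0max hin) (by simpa using not_le.mpr this)
  · push_neg at hcase
    have h0 : 0 ≤ t0 - b := by linarith
    have h1 : (t0 - b) + b ≤ 1 := by linarith
    have := hpb (t0 - b) h0 h1
    rw [sub_add_cancel] at this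
    have hin : t0 - b ∈ Set.Icc (0:ℝ) (a + b) := ⟨h0, by linarith⟩
    exact absurd (ht0max hin) (by simpa using not_le.mpr this)

-- A non-chord length gives a constant-sign difference function.
lemma chord_sign (f : ℝ → ℝ) (hf : ContinuousOn f (Set.Icc 0 1))
    (ℓ : ℝ) (h0ℓ : 0 < ℓ) (hℓ1 : ℓ ≤ 1) (hℓ : ℓ ∉ chordSet f) :
    (∀ t, 0 ≤ t → t + ℓ ≤ 1 → f t < f (t + ℓ)) ∨
    (∀ t, 0 ≤ t → t + ℓ ≤ 1 → f (t + ℓ) < f t) := by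
  set g : ℝ → ℝ := fun t => f (t + ℓ) - f t with hg
  have hgc : ContinuousOn g (Set.Icc 0 (1 - ℓ)) := by
    apply ContinuousOn.sub
    · apply ContinuousOn.comp hf (by fun_prop)
      intro t ht
      simp only [Set.mem_Icc] at ht ⊢
      constructor <;> linarith [ht.1, ht.2]
    · exact hf.mono (Set.Icc_subset_Icc le_rfl (by linarith))
  have hne : ∀ t ∈ Set.Icc (0:ℝ) (1 - ℓ), g t ≠ 0 := by
    intro t ht h
    apply hℓ
    refine ⟨⟨le_of_lt h0ℓ, hℓ1⟩, t, ⟨ht.1, by linarith [ht.2]⟩, ⟨by linarith [ht.1], by linarith [ht.2]⟩, ?_⟩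
    have := sub_eq_zero.mp h
    linarith [this]
  -- g has constant sign on the interval [0, 1-ℓ]
  have key : ∀ t ∈ Set.Icc (0:ℝ) (1 - ℓ), ∀ t' ∈ Set.Icc (0:ℝ) (1 - ℓ),
      0 < g t → 0 < g t' := by
    intro t ht t' ht' hgt
    by_contra h
    push_neg at h
    have hgt' : g t' < 0 := lt_of_le_of_ne h (hne t' ht')
    have husub : Set.uIcc t' t ⊆ Set.Icc (0:ℝ) (1 - ℓ) := Set.uIcc_subset_Icc ht' ht
    have := intermediate_value_uIcc (hgc.mono husub)
    have h0mem : (0:ℝ) ∈ Set.uIcc (g t') (g t) :=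
      Set.mem_uIcc.mpr (Or.inl ⟨le_of_lt hgt', le_of_lt hgt⟩)
    obtain ⟨c, hcmem, hc⟩ := this h0mem
    exact hne c (husub hcmem) hc
  have h0mem : (0:ℝ) ∈ Set.Icc (0:ℝ) (1 - ℓ) := ⟨le_rfl, by linarith⟩
  rcases lt_or_gt_of_ne (hne 0 h0mem) with hneg | hpos
  · right
    intro t h0t ht1
    have htmem : t ∈ Set.Icc (0:ℝ) (1 - ℓ) := ⟨h0t, by linarith⟩
    by_contra h
    push_neg at h
    have : 0 < g t := lt_of_le_of_ne (by simp [hg]; linarith) (Ne.symm (hne t htmem))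
    have := key t htmem 0 h0mem this
    linarith
  · left
    intro t h0t ht1
    have htmem : t ∈ Set.Icc (0:ℝ) (1 - ℓ) := ⟨h0t, by linarith⟩
    have := key 0 h0mem t htmem hpos
    simp only [hg] at this
    linarith

-- Key step: if d is a chord length and 0 < ℓ < d with ℓ not a chord length, then d - ℓ is.
lemma chord_step (f : ℝ → ℝ) (hf : ContinuousOn f (Set.Icc 0 1))
    (d : ℝ) (hdS : d ∈ chordSet f) (ℓ : ℝ) (h0ℓ : 0 < ℓ) (hℓd : ℓ < d)
    (hℓ : ℓ ∉ chordSet f) : d - ℓ ∈ chordSet f := by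
  obtain ⟨⟨hd0, hd1⟩, s, ⟨hs0, hs1⟩, ⟨hsd0, hsd1⟩, hfs⟩ := hdS
  by_contra hm
  have hsℓ := chord_sign f hf ℓ h0ℓ (by linarith) hℓ
  have hsm := chord_sign f hf (d - ℓ) (by linarith) (by linarith) hm
  have e1 : s + ℓ + (d - ℓ) = s + d := by ring
  rcases hsℓ with hp | hn <;> rcases hsm with hp' | hn'
  · -- both increasing: f s < f (s + ℓ) < f (s + d)
    have h1 := hp s hs0 (by linarith)
    have h2 := hp' (s + ℓ) (by linarith) (by linarith)
    rw [e1] at h2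
    linarith
  · exact chord_core f hf ℓ (d - ℓ) h0ℓ (by linarith) (by linarith) hp
      (fun t h1 h2 => hn' t h1 h2)
  · exact chord_core f hf (d - ℓ) ℓ (by linarith) h0ℓ (by linarith) hp'
      (fun t h1 h2 => hn t h1 h2)
  · have h1 := hn s hs0 (by linarith)
    have h2 := hn' (s + ℓ) (by linarith) (by linarith)
    rw [e1] at h2
    linarith

theorem stmt9 (f : ℝ → ℝ) (hf : ContinuousOn f (Set.Icc 0 1))
    (h0 : f 0 = 0) (h1 : f 1 = 0) (d : ℝ) (hd : d ∈ Set.Ioc (0:ℝ) 1)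
    (hdS : d ∈ chordSet f) :
    MeasureTheory.volume (chordSet f ∩ Set.Icc 0 d) ≥ ENNReal.ofReal (d / 2) := by
  obtain ⟨hd0, hd1⟩ := hd
  set T := chordSet f ∩ Set.Icc 0 d with hT
  have hcover : Set.Icc 0 d ⊆ T ∪ (fun x => d - x) ⁻¹' T := by
    intro ℓ ⟨h0ℓ, hℓd⟩
    by_cases hc : ℓ ∈ chordSet f
    · exact Or.inl ⟨hc, h0ℓ, hℓd⟩
    · right
      have hℓ0 : ℓ ≠ 0 := by
        rintro rfl
        exact hc ⟨⟨le_rfl, by linarith⟩, 0, ⟨le_rfl, by linarith⟩, by norm_num⟩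
      have hℓd' : ℓ ≠ d := fun h => hc (h ▸ hdS)
      have := chord_step f hf d hdS ℓ (lt_of_le_of_ne h0ℓ (Ne.symm hℓ0))
        (lt_of_le_of_ne hℓd hℓd') hc
      exact ⟨this, by constructor <;> simp <;> linarith⟩
  have hmeas : MeasureTheory.volume ((fun x => d - x) ⁻¹' T) = MeasureTheory.volume T := by
    have h1 : (fun x : ℝ => d - x) ⁻¹' T = -((fun y => y + d) ⁻¹' T) := by
      ext x; simp [Set.mem_neg, neg_add_eq_sub]
    rw [h1, MeasureTheory.Measure.measure_neg, MeasureTheory.measure_preimage_add_right]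
  have hle : MeasureTheory.volume (Set.Icc (0:ℝ) d) ≤ 2 * MeasureTheory.volume T := by
    calc MeasureTheory.volume (Set.Icc (0:ℝ) d)
        ≤ MeasureTheory.volume (T ∪ (fun x => d - x) ⁻¹' T) := MeasureTheory.measure_mono hcover
      _ ≤ MeasureTheory.volume T + MeasureTheory.volume ((fun x => d - x) ⁻¹' T) :=
          MeasureTheory.measure_union_le _ _
      _ = 2 * MeasureTheory.volume T := by rw [hmeas]; ring
  rw [Real.volume_Icc, sub_zero] at hle
  rw [ge_iff_le]
  have h2 : ENNReal.ofReal d = 2 * ENNReal.ofReal (d / 2) := by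
    rw [← ENNReal.ofReal_ofNat, ← ENNReal.ofReal_mul (by positivity)]
    congr 1
    ring
  rw [h2] at hle
  exact (ENNReal.mul_le_mul_iff_right (by norm_num) ENNReal.ofNat_ne_top).mp hle
end

section
/- For every d ∈ S(f), the union of S(f) ∩ [0,d] and its reflection {d - ℓ : ℓ ∈ S(f) ∩ [0,d]} equals [0,d]. -/
/-!
Hopf's argument. Let `f s = f (s + a + b)` and compare `f (t + a)` with `f t` for
`t ∈ [s, s + b]`, and `f (t + b)` with `f t` for `t ∈ [s, s + a]`. If `f (s + b) ≤ f s`, the first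
difference is `≥ 0` at `t = s + b` and the second is `≤ 0` at `t = s`. At a maximum point `M` of
`f` on `[s, s + a + b]` the first difference is `≤ 0` at `t = M` (if `M ≤ s + b`) or the second is
`≥ 0` at `t = M - b` (otherwise), so the intermediate value theorem gives a chord of length `a`
or `b`. The case `f s ≤ f (s + b)` follows by applying this to `-f`.
-/

open Set

lemma exists_chord_of_chord_add_of_le {f : ℝ → ℝ} {s a b : ℝ} (ha : 0 ≤ a) (hb : 0 ≤ b)
    (hf : ContinuousOn f (Icc s (s + a + b))) (hend : f s = f (s + a + b))
    (hle : f (s + b) ≤ f s) :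
    (∃ t ∈ Icc s (s + b), f (t + a) = f t) ∨ (∃ t ∈ Icc s (s + a), f t = f (t + b)) := by
  obtain ⟨M, hM, hmax⟩ := isCompact_Icc.exists_isMaxOn (nonempty_Icc.2 (by linarith)) hf
  have hshift (c : ℝ) {p q : ℝ} (hsub : Icc (p + c) (q + c) ⊆ Icc s (s + a + b)) :
      ContinuousOn (fun t => f (t + c)) (Icc p q) :=
    hf.comp (continuous_add_const c).continuousOn fun t ht =>
      hsub ⟨by linarith [ht.1], by linarith [ht.2]⟩
  rcases le_or_gt M (s + b) with hMb | hMb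
  · left
    refine isPreconnected_Icc.intermediate_value₂ (a := M) (b := s + b)
      ⟨hM.1, hMb⟩ ⟨by linarith, le_rfl⟩
      (hshift a (Icc_subset_Icc (by linarith) (by linarith)))
      (hf.mono (Icc_subset_Icc le_rfl (by linarith))) ?_ ?_
    · exact hmax ⟨by linarith [hM.1], by linarith⟩
    · rw [show s + b + a = s + a + b by ring, ← hend]; exact hle
  · right
    refine isPreconnected_Icc.intermediate_value₂ (a := M - b) (b := s)
      ⟨by linarith, by linarith [hM.2]⟩ ⟨le_rfl, by linarith⟩
      (hf.mono (Icc_subset_Icc le_rfl (by linarith)))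
      (hshift b (Icc_subset_Icc (by linarith) (by linarith))) ?_ hle
    rw [sub_add_cancel]
    exact hmax ⟨by linarith, by linarith [hM.2]⟩

lemma exists_chord_of_chord_add {f : ℝ → ℝ} {s a b : ℝ} (ha : 0 ≤ a) (hb : 0 ≤ b)
    (hf : ContinuousOn f (Icc s (s + a + b))) (hend : f s = f (s + a + b)) :
    (∃ t ∈ Icc s (s + b), f (t + a) = f t) ∨ (∃ t ∈ Icc s (s + a), f t = f (t + b)) := by
  rcases le_total (f (s + b)) (f s) with hle | hle
  · exact exists_chord_of_chord_add_of_le ha hb hf hend hle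
  · simpa only [Pi.neg_apply, neg_inj] using
      exists_chord_of_chord_add_of_le (f := -f) ha hb hf.neg (by simp [hend])
        (by simpa using hle)

lemma mem_chordSet {f : ℝ → ℝ} {ℓ t : ℝ} (hℓ : 0 ≤ ℓ) (ht : 0 ≤ t) (htℓ : t + ℓ ≤ 1)
    (heq : f t = f (t + ℓ)) : ℓ ∈ chordSet f :=
  ⟨⟨hℓ, by linarith⟩, t, ⟨ht, by linarith⟩, ⟨by linarith, htℓ⟩, heq⟩

lemma mem_chordSet_or_sub_mem_chordSet {f : ℝ → ℝ} (hf : ContinuousOn f (Icc 0 1)) {d x : ℝ}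
    (hd : d ∈ chordSet f) (hx : x ∈ Icc 0 d) : x ∈ chordSet f ∨ d - x ∈ chordSet f := by
  obtain ⟨-, s, hs, hsd, hend⟩ := hd
  have hsum : s + x + (d - x) = s + d := by ring
  rcases exists_chord_of_chord_add (f := f) (s := s) hx.1 (sub_nonneg.2 hx.2)
      (hsum ▸ hf.mono (Icc_subset_Icc hs.1 hsd.2)) (hsum ▸ hend)
    with ⟨t, ht, heq⟩ | ⟨t, ht, heq⟩
  · exact .inl (mem_chordSet hx.1 (by linarith [hs.1, ht.1]) (by linarith [hsd.2, ht.2])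
      heq.symm)
  · exact .inr (mem_chordSet (sub_nonneg.2 hx.2) (by linarith [hs.1, ht.1])
      (by linarith [hsd.2, ht.2]) heq)

theorem stmt11_general (f : ℝ → ℝ) (hf : ContinuousOn f (Set.Icc 0 1))
    (d : ℝ) (hdS : d ∈ chordSet f) :
    (chordSet f ∩ Set.Icc 0 d) ∪ ((fun ℓ => d - ℓ) '' (chordSet f ∩ Set.Icc 0 d))
      = Set.Icc 0 d := by
  refine Subset.antisymm (union_subset inter_subset_right ?_) fun x hx => ?_
  · rintro _ ⟨ℓ, ⟨-, hℓ0, hℓd⟩, rfl⟩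
    exact ⟨by linarith, by linarith⟩
  · rcases mem_chordSet_or_sub_mem_chordSet hf hdS hx with h | h
    · exact .inl ⟨h, hx⟩
    · exact .inr ⟨d - x, ⟨h, by linarith [hx.2], by linarith [hx.1]⟩, sub_sub_cancel d x⟩

theorem stmt11 (f : ℝ → ℝ) (hf : ContinuousOn f (Set.Icc 0 1))
    (h0 : f 0 = 0) (h1 : f 1 = 0) (d : ℝ) (hdS : d ∈ chordSet f) :
    (chordSet f ∩ Set.Icc 0 d) ∪ ((fun ℓ => d - ℓ) '' (chordSet f ∩ Set.Icc 0 d))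
      = Set.Icc 0 d :=
  stmt11_general f hf d hdS
end

section
/- For each n ∈ ℕ with n ≥ 1, the set Sₙ* = ⋃_{k=1}^{n} (k/(n+1), k/n) is an open additive subset of (0,1]: if a, b ∈ Sₙ* and a + b ≤ 1, then a + b ∈ Sₙ*. -/
/-!
Adding `a ∈ (j/(n+1), j/n)` and `b ∈ (k/(n+1), k/n)` lands in `((j+k)/(n+1), (j+k)/n)`,
and `a + b ≤ 1` forces `j + k < n + 1`, so this is again one of the intervals.
-/

def sStar (n : ℕ) : Set ℝ := ⋃ k ∈ Finset.Icc 1 n, Set.Ioo ((k:ℝ)/(n+1)) ((k:ℝ)/n)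

lemma mem_sStar_iff {n : ℕ} {x : ℝ} :
    x ∈ sStar n ↔ ∃ k : ℕ, (1 ≤ k ∧ k ≤ n) ∧ (k:ℝ)/(n+1) < x ∧ x < (k:ℝ)/n := by
  simp only [sStar, Set.mem_iUnion, Finset.mem_Icc, Set.mem_Ioo, exists_prop]

lemma isOpen_sStar (n : ℕ) : IsOpen (sStar n) :=
  isOpen_biUnion fun _ _ => isOpen_Ioo

lemma sStar_subset_Ioc (n : ℕ) : sStar n ⊆ Set.Ioc 0 1 := by
  intro x hx
  obtain ⟨k, ⟨hk1, hkn⟩, hkx, hxk⟩ := mem_sStar_iff.mp hx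
  have hk_pos : (0:ℝ) < (k:ℝ)/(n+1) := div_pos (by exact_mod_cast hk1) (by positivity)
  have hk_le : (k:ℝ)/n ≤ 1 := div_le_one_of_le₀ (by exact_mod_cast hkn) (by positivity)
  exact ⟨hk_pos.trans hkx, hxk.le.trans hk_le⟩

lemma add_mem_sStar {n : ℕ} {a b : ℝ} (ha : a ∈ sStar n) (hb : b ∈ sStar n) (hab : a + b ≤ 1) :
    a + b ∈ sStar n := by
  obtain ⟨j, ⟨hj1, -⟩, hja, haj⟩ := mem_sStar_iff.mp ha
  obtain ⟨k, -, hkb, hbk⟩ := mem_sStar_iff.mp hb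
  have hlower : ((j + k : ℕ) : ℝ)/(n+1) < a + b := by
    rw [Nat.cast_add, add_div]; exact add_lt_add hja hkb
  have hupper : a + b < ((j + k : ℕ) : ℝ)/n := by
    rw [Nat.cast_add, add_div]; exact add_lt_add haj hbk
  have hjk : j + k ≤ n := by
    have hlt : ((j + k : ℕ) : ℝ)/(n+1) < 1 := hlower.trans_le hab
    rw [div_lt_one (by positivity)] at hlt
    have : j + k < n + 1 := by exact_mod_cast hlt
    omega
  exact mem_sStar_iff.mpr ⟨j + k, ⟨by omega, hjk⟩, hlower, hupper⟩

theorem stmt12_general (n : ℕ) :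
    IsOpen (⋃ k ∈ Finset.Icc 1 n, Set.Ioo ((k:ℝ)/(n+1)) ((k:ℝ)/n)) ∧
    (⋃ k ∈ Finset.Icc 1 n, Set.Ioo ((k:ℝ)/(n+1)) ((k:ℝ)/n)) ⊆ Set.Ioc (0:ℝ) 1 ∧
    ∀ a b : ℝ, a ∈ (⋃ k ∈ Finset.Icc 1 n, Set.Ioo ((k:ℝ)/(n+1)) ((k:ℝ)/n)) →
      b ∈ (⋃ k ∈ Finset.Icc 1 n, Set.Ioo ((k:ℝ)/(n+1)) ((k:ℝ)/n)) → a + b ≤ 1 →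
      a + b ∈ (⋃ k ∈ Finset.Icc 1 n, Set.Ioo ((k:ℝ)/(n+1)) ((k:ℝ)/n)) :=
  ⟨isOpen_sStar n, sStar_subset_Ioc n, fun _ _ => add_mem_sStar⟩

theorem stmt12 (n : ℕ) (hn : 1 ≤ n) :
    IsOpen (⋃ k ∈ Finset.Icc 1 n, Set.Ioo ((k:ℝ)/(n+1)) ((k:ℝ)/n)) ∧
    (⋃ k ∈ Finset.Icc 1 n, Set.Ioo ((k:ℝ)/(n+1)) ((k:ℝ)/n)) ⊆ Set.Ioc (0:ℝ) 1 ∧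
    ∀ a b : ℝ, a ∈ (⋃ k ∈ Finset.Icc 1 n, Set.Ioo ((k:ℝ)/(n+1)) ((k:ℝ)/n)) →
      b ∈ (⋃ k ∈ Finset.Icc 1 n, Set.Ioo ((k:ℝ)/(n+1)) ((k:ℝ)/n)) → a + b ≤ 1 →
      a + b ∈ (⋃ k ∈ Finset.Icc 1 n, Set.Ioo ((k:ℝ)/(n+1)) ((k:ℝ)/n)) :=
  stmt12_general n
end

section
/- For every ℓ ∈ [0,1], there exist points x, y in the middle-thirds Cantor set C with y − x = ℓ; i.e., the difference set C − C equals [−1,1]. -/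
/-!
Each stage `Pₙ₊₁ = Pₙ/3 ∪ (2 + Pₙ)/3` of the Cantor construction satisfies
`Pₙ₊₁ + Pₙ₊₁ = ((Pₙ + Pₙ) ∪ (2 + Pₙ + Pₙ) ∪ (4 + Pₙ + Pₙ)) / 3`, so by induction `Pₙ + Pₙ = [0, 2]`
for every `n`. For `t ∈ [0, 2]` the solutions of `x + y = t` in `Pₙ × Pₙ` form a decreasing sequence
of nonempty compact sets, whose intersection gives `x, y ∈ C` with `x + y = t`. Since `C` is
symmetric under `x ↦ 1 - x`, this turns into `C - C = [-1, 1]`.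
-/

open Set
open scoped Pointwise

lemma one_sub_mem_preCantorSet {n : ℕ} {x : ℝ} (hx : x ∈ preCantorSet n) :
    1 - x ∈ preCantorSet n := by
  induction n generalizing x with
  | zero => exact ⟨by linarith [hx.2], by linarith [hx.1]⟩
  | succ n ih =>
    rcases hx with ⟨u, hu, rfl⟩ | ⟨u, hu, rfl⟩
    · exact Or.inr ⟨1 - u, ih hu, by ring⟩
    · exact Or.inl ⟨1 - u, ih hu, by ring⟩

lemma one_sub_mem_cantorSet {x : ℝ} (hx : x ∈ cantorSet) : 1 - x ∈ cantorSet :=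
  mem_iInter.mpr fun n => one_sub_mem_preCantorSet (mem_iInter.mp hx n)

lemma preCantorSet_add_self (n : ℕ) : preCantorSet n + preCantorSet n = Icc 0 2 := by
  refine Subset.antisymm ?_ fun t ht => ?_
  · rintro _ ⟨x, hx, y, hy, rfl⟩
    have hx' := preCantorSet_subset_unitInterval hx
    have hy' := preCantorSet_subset_unitInterval hy
    exact ⟨by linarith [hx'.1, hy'.1], by linarith [hx'.2, hy'.2]⟩
  induction n generalizing t with
  | zero =>
    exact ⟨t / 2, ⟨by linarith [ht.1], by linarith [ht.2]⟩,
      t / 2, ⟨by linarith [ht.1], by linarith [ht.2]⟩, by ring⟩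
  | succ n ih =>
    simp only [preCantorSet_succ]
    rcases le_total t (2 / 3) with h₁ | h₁
    · obtain ⟨x, hx, y, hy, hxy⟩ := ih (3 * t) ⟨by linarith [ht.1], by linarith⟩
      exact ⟨x / 3, Or.inl ⟨x, hx, rfl⟩, y / 3, Or.inl ⟨y, hy, rfl⟩, by linarith⟩
    rcases le_total t (4 / 3) with h₂ | h₂
    · obtain ⟨x, hx, y, hy, hxy⟩ := ih (3 * t - 2) ⟨by linarith, by linarith⟩
      exact ⟨x / 3, Or.inl ⟨x, hx, rfl⟩, (2 + y) / 3, Or.inr ⟨y, hy, rfl⟩, by linarith⟩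
    · obtain ⟨x, hx, y, hy, hxy⟩ := ih (3 * t - 4) ⟨by linarith, by linarith [ht.2]⟩
      exact ⟨(2 + x) / 3, Or.inr ⟨x, hx, rfl⟩, (2 + y) / 3, Or.inr ⟨y, hy, rfl⟩, by linarith⟩

lemma cantorSet_add_self : cantorSet + cantorSet = Icc (0 : ℝ) 2 := by
  refine Subset.antisymm ?_ fun t ht => ?_
  · rw [← preCantorSet_add_self 0]
    exact add_subset_add (iInter_subset _ 0) (iInter_subset _ 0)
  let K : ℕ → Set (ℝ × ℝ) := fun n =>
    preCantorSet n ×ˢ preCantorSet n ∩ (fun p => p.1 + p.2) ⁻¹' {t}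
  have hK_closed (n : ℕ) : IsClosed (K n) :=
    ((isClosed_preCantorSet n).prod (isClosed_preCantorSet n)).inter
      (isClosed_singleton.preimage (by fun_prop))
  have hK_nonempty (n : ℕ) : (K n).Nonempty := by
    obtain ⟨x, hx, y, hy, hxy⟩ := (preCantorSet_add_self n).symm ▸ ht
    exact ⟨(x, y), ⟨hx, hy⟩, hxy⟩
  have hK_succ (n : ℕ) : K (n + 1) ⊆ K n :=
    inter_subset_inter_left _ <| prod_mono (preCantorSet_antitone n.le_succ)
      (preCantorSet_antitone n.le_succ)
  have hK_compact : IsCompact (K 0) :=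
    (isCompact_Icc.prod isCompact_Icc).of_isClosed_subset (hK_closed 0) inter_subset_left
  obtain ⟨⟨x, y⟩, hp⟩ :=
    IsCompact.nonempty_iInter_of_sequence_nonempty_isCompact_isClosed K hK_succ hK_nonempty
      hK_compact hK_closed
  simp only [K, mem_iInter, mem_inter_iff, mem_prod, mem_preimage, mem_singleton_iff] at hp
  exact ⟨x, mem_iInter.mpr fun n => (hp n).1.1, y, mem_iInter.mpr fun n => (hp n).1.2, (hp 0).2⟩

lemma cantorSet_sub_self : cantorSet - cantorSet = Icc (-1 : ℝ) 1 := by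
  ext d
  rw [mem_sub]
  constructor
  · rintro ⟨x, hx, y, hy, rfl⟩
    have hx' := cantorSet_subset_unitInterval hx
    have hy' := cantorSet_subset_unitInterval hy
    exact ⟨by linarith [hx'.1, hy'.2], by linarith [hx'.2, hy'.1]⟩
  · rintro ⟨hd₁, hd₂⟩
    have h : 1 + d ∈ cantorSet + cantorSet := by
      rw [cantorSet_add_self]
      exact ⟨by linarith, by linarith⟩
    obtain ⟨x, hx, y, hy, hxy⟩ := h
    exact ⟨x, hx, 1 - y, one_sub_mem_cantorSet hy, by linarith⟩

theorem stmt17 :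
    (∀ ℓ ∈ Set.Icc (0:ℝ) 1, ∃ x ∈ cantorSet, ∃ y ∈ cantorSet, y - x = ℓ) ∧
    {d : ℝ | ∃ x ∈ cantorSet, ∃ y ∈ cantorSet, x - y = d} = Set.Icc (-1) 1 := by
  refine ⟨fun ℓ hℓ => ?_, cantorSet_sub_self⟩
  have : ℓ ∈ cantorSet - cantorSet := by
    rw [cantorSet_sub_self]
    exact ⟨by linarith [hℓ.1], hℓ.2⟩
  obtain ⟨y, hy, x, hx, hyx⟩ := this
  exact ⟨x, hx, y, hy, hyx⟩
end

section
/- If f|[s₁,s₂] and f|[t₁,t₂] are mountains (f = 0 at endpoints, f > 0 strictly inside) of a continuous f : [0,1] → ℝ with f(0) = f(1) = 0, with s₂ ≤ t₁, the first mountain narrower (s₂ − s₁ ≤ t₂ − t₁) and at least as high (max on [s₁,s₂] ≥ max on [t₁,t₂]), then every ℓ ∈ [t₁ − s₂, t₂ − s₁] lies in S(f). -/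
theorem stmt18 (f : ℝ → ℝ) (hf : ContinuousOn f (Set.Icc 0 1))
    (h0 : f 0 = 0) (h1 : f 1 = 0) (s₁ s₂ t₁ t₂ : ℝ)
    (hs₁ : (0:ℝ) ≤ s₁) (hs : s₁ < s₂) (hst : s₂ ≤ t₁) (ht : t₁ < t₂) (ht₂ : t₂ ≤ 1)
    (hfs₁ : f s₁ = 0) (hfs₂ : f s₂ = 0) (hft₁ : f t₁ = 0) (hft₂ : f t₂ = 0)
    (hm₁ : ∀ x ∈ Set.Ioo s₁ s₂, 0 < f x) (hm₂ : ∀ x ∈ Set.Ioo t₁ t₂, 0 < f x)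
    (hnarrow : s₂ - s₁ ≤ t₂ - t₁)
    (hhigh : sSup (f '' Set.Icc t₁ t₂) ≤ sSup (f '' Set.Icc s₁ s₂)) :
    ∀ ℓ ∈ Set.Icc (t₁ - s₂) (t₂ - s₁), ℓ ∈ chordSet f := by
  intro ℓ hℓ
  obtain ⟨hℓ1, hℓ2⟩ := hℓ
  have hℓ0 : 0 ≤ ℓ := le_trans (by linarith) hℓ1
  -- f is nonnegative on both mountains
  have hfs_nn : ∀ x ∈ Set.Icc s₁ s₂, 0 ≤ f x := by
    intro x hx
    rcases eq_or_lt_of_le hx.1 with h | h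
    · rw [← h]; exact hfs₁.ge
    rcases eq_or_lt_of_le hx.2 with h' | h'
    · rw [h']; exact hfs₂.ge
    exact (hm₁ x ⟨h, h'⟩).le
  have hft_nn : ∀ x ∈ Set.Icc t₁ t₂, 0 ≤ f x := by
    intro x hx
    rcases eq_or_lt_of_le hx.1 with h | h
    · rw [← h]; exact hft₁.ge
    rcases eq_or_lt_of_le hx.2 with h' | h'
    · rw [h']; exact hft₂.ge
    exact (hm₂ x ⟨h, h'⟩).le
  have hsub1 : Set.Icc s₁ s₂ ⊆ Set.Icc (0:ℝ) 1 := Set.Icc_subset_Icc hs₁ (by linarith)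
  have hsub2 : Set.Icc t₁ t₂ ⊆ Set.Icc (0:ℝ) 1 := Set.Icc_subset_Icc (by linarith) ht₂
  -- maximum point of the left mountain
  obtain ⟨p, hp, hpmax⟩ := isCompact_Icc.exists_isMaxOn
    ⟨s₁, Set.left_mem_Icc.2 hs.le⟩ (hf.mono hsub1)
  have hpmax' : ∀ x ∈ Set.Icc s₁ s₂, f x ≤ f p := hpmax
  have hpt : ∀ y ∈ Set.Icc t₁ t₂, f y ≤ f p := by
    intro y hy
    have h1 : f y ≤ sSup (f '' Set.Icc t₁ t₂) :=
      le_csSup (isCompact_Icc.image_of_continuousOn (hf.mono hsub2)).bddAbove ⟨y, hy, rfl⟩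
    have h2 : sSup (f '' Set.Icc s₁ s₂) ≤ f p := by
      apply csSup_le (Set.Nonempty.image f ⟨s₁, Set.left_mem_Icc.2 hs.le⟩)
      rintro _ ⟨x, hx, rfl⟩
      exact hpmax' x hx
    linarith
  set c := max s₁ (t₁ - ℓ) with hc
  set d := min s₂ (t₂ - ℓ) with hd
  have hcd : c ≤ d := by
    apply max_le
    · apply le_min hs.le (by linarith)
    · apply le_min (by linarith) (by linarith)
  have hcs : s₁ ≤ c := le_max_left _ _
  have hds : d ≤ s₂ := min_le_left _ _
  have hct : t₁ - ℓ ≤ c := le_max_right _ _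
  have hdt : d ≤ t₂ - ℓ := min_le_right _ _
  -- continuity of g x = f x - f (x + ℓ) on [c, d]
  have hmem1 : ∀ x ∈ Set.Icc c d, x ∈ Set.Icc s₁ s₂ := fun x hx =>
    ⟨le_trans hcs hx.1, le_trans hx.2 hds⟩
  have hmem2 : ∀ x ∈ Set.Icc c d, x + ℓ ∈ Set.Icc t₁ t₂ := fun x hx =>
    ⟨by have := le_trans hct hx.1; linarith, by have := le_trans hx.2 hdt; linarith⟩
  have hg : ContinuousOn (fun x => f x - f (x + ℓ)) (Set.Icc c d) := by
    apply ContinuousOn.sub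
    · exact hf.comp continuousOn_id fun x hx => hsub1 (hmem1 x hx)
    · exact hf.comp (continuousOn_id.add continuousOn_const)
        fun x hx => hsub2 (hmem2 x hx)
  -- a point where g ≤ 0
  have hneg : ∃ u ∈ Set.Icc c d, f u - f (u + ℓ) ≤ 0 := by
    by_cases h : s₂ ≤ t₂ - ℓ
    · refine ⟨s₂, ⟨max_le hs.le (by linarith), le_min le_rfl h⟩, ?_⟩
      have hmem : s₂ + ℓ ∈ Set.Icc t₁ t₂ := ⟨by linarith, by linarith⟩
      have := hft_nn _ hmem
      rw [hfs₂]; linarith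
    · push_neg at h
      have hcs₁ : c = s₁ := by
        rw [hc]; apply max_eq_left; linarith
      refine ⟨s₁, ⟨hcs₁.le, hcs₁ ▸ hcd⟩, ?_⟩
      have hmem : s₁ + ℓ ∈ Set.Icc t₁ t₂ := ⟨by linarith, by linarith⟩
      have := hft_nn _ hmem
      rw [hfs₁]; linarith
  -- a point where g ≥ 0
  have hpos : ∃ v ∈ Set.Icc c d, 0 ≤ f v - f (v + ℓ) := by
    by_cases h1 : c ≤ p
    · by_cases h2 : p ≤ d
      · refine ⟨p, ⟨h1, h2⟩, ?_⟩
        have := hpt (p + ℓ) (hmem2 p ⟨h1, h2⟩)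
        linarith
      · push_neg at h2
        have hdt' : d = t₂ - ℓ := by
          rcases le_total s₂ (t₂ - ℓ) with h' | h'
          · exfalso
            have : d = s₂ := by rw [hd]; exact min_eq_left h'
            linarith [hp.2]
          · exact min_eq_right h'
        refine ⟨d, ⟨hcd, le_rfl⟩, ?_⟩
        have : f d ≥ 0 := hfs_nn d (hmem1 d ⟨hcd, le_rfl⟩)
        have he : d + ℓ = t₂ := by rw [hdt']; ring
        rw [he, hft₂]; linarith
    · push_neg at h1
      have hct' : c = t₁ - ℓ := by
        rcases le_total (t₁ - ℓ) s₁ with h' | h'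
        · exfalso
          have : c = s₁ := by rw [hc]; exact max_eq_left h'
          linarith [hp.1]
        · exact max_eq_right h'
      refine ⟨c, ⟨le_rfl, hcd⟩, ?_⟩
      have : f c ≥ 0 := hfs_nn c (hmem1 c ⟨le_rfl, hcd⟩)
      have he : c + ℓ = t₁ := by rw [hct']; ring
      rw [he, hft₁]; linarith
  obtain ⟨u, hu, hgu⟩ := hneg
  obtain ⟨v, hv, hgv⟩ := hpos
  have hsub : Set.uIcc u v ⊆ Set.Icc c d := Set.uIcc_subset_Icc hu hv
  have hivt := intermediate_value_uIcc (hg.mono hsub)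
  have h0mem : (0:ℝ) ∈ Set.uIcc (f u - f (u + ℓ)) (f v - f (v + ℓ)) :=
    Set.mem_uIcc.2 (Or.inl ⟨hgu, hgv⟩)
  obtain ⟨x, hx, hgx⟩ := hivt h0mem
  have hxcd : x ∈ Set.Icc c d := hsub hx
  have hx1 : x ∈ Set.Icc (0:ℝ) 1 := hsub1 (hmem1 x hxcd)
  have hx2 : x + ℓ ∈ Set.Icc (0:ℝ) 1 := hsub2 (hmem2 x hxcd)
  refine ⟨⟨hℓ0, by linarith⟩, x, hx1, hx2, sub_eq_zero.mp hgx⟩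
end

section
/- If S ⊆ [0,1] is closed, contains 0 and 1, and its complement in (0,1) is additive (a, b ∉ S and a + b ≤ 1 imply a + b ∉ S), then the Lebesgue measure of S is at least 1/2. -/
theorem stmt19 (S : Set ℝ) (hS : S ⊆ Set.Icc 0 1) (hclosed : IsClosed S)
    (h0 : (0:ℝ) ∈ S) (h1 : (1:ℝ) ∈ S)
    (hadd : ∀ a b : ℝ, a ∈ Set.Ioo (0:ℝ) 1 → b ∈ Set.Ioo (0:ℝ) 1 →
      a ∉ S → b ∉ S → a + b ≤ 1 → a + b ∉ S) :
    MeasureTheory.volume S ≥ 1/2 := by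
  set T : Set ℝ := (fun x => 1 - x) ⁻¹' S with hT
  have hsub : Set.Ioo (0:ℝ) 1 ⊆ S ∪ T := by
    intro x hx
    by_contra hx'
    simp only [Set.mem_union, not_or] at hx'
    obtain ⟨hxS, hxT⟩ := hx'
    have h1x : (1 - x) ∈ Set.Ioo (0:ℝ) 1 := by
      constructor <;> [linarith [hx.2]; linarith [hx.1]]
    have : (1 - x) ∉ S := hxT
    have := hadd x (1 - x) hx h1x hxS this (by linarith)
    simp at this
    exact this h1
  have hTvol : MeasureTheory.volume T = MeasureTheory.volume S := by
    have : (fun x : ℝ => 1 - x) ⁻¹' S = (fun x : ℝ => x + (-1)) ⁻¹' ((fun x : ℝ => -x) ⁻¹' S) := by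
      ext x; simp; ring_nf
    rw [hT, this, MeasureTheory.measure_preimage_add_right,
      MeasureTheory.Measure.measure_preimage_neg]
  have hle : (1:ENNReal) ≤ 2 * MeasureTheory.volume S := by
    calc (1:ENNReal) = MeasureTheory.volume (Set.Ioo (0:ℝ) 1) := by
          simp [Real.volume_Ioo]
      _ ≤ MeasureTheory.volume (S ∪ T) := MeasureTheory.measure_mono hsub
      _ ≤ MeasureTheory.volume S + MeasureTheory.volume T := MeasureTheory.measure_union_le _ _
      _ = 2 * MeasureTheory.volume S := by rw [hTvol]; ring
  rw [ge_iff_le, ENNReal.div_le_iff_le_mul (by simp) (by simp)]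
  rwa [mul_comm]
end
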